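/- In the branching algorithm for Strict Steiner Multicut, adding any vertex of a violated terminal set to Y strictly increases the x–Y vertex maxflow: let G be a graph, x a vertex, Y ⊆ V(G) with x ∉ Y, and let W be the minimum xY-separator closest to x. If t is a vertex connected to x in G − W (t not separated from x by W), then the minimum size of an x(Y ∪ {t})-separator is strictly larger than |W|. -/
import Mathlib


/-- The set of vertices reachable from `x` by a walk avoiding `S`. -/
def reachSet {V : Type*} (G : SimpleGraph V) (x : V) (S : Finset V) : Set V :=
  {v | ∃ p : G.Walk x v, ∀ u ∈ p.support, u ∉ S}

/-- `S` is an `xY`-separator: `x ∉ S` and no vertex of `Y` is reachable from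
`x` by a walk avoiding `S`. -/
def IsSep {V : Type*} (G : SimpleGraph V) (x : V) (Y : Set V) (S : Finset V) : Prop :=
  x ∉ S ∧ ∀ y ∈ Y, y ∉ reachSet G x S

/-- `S` is a minimum-size `xY`-separator. -/
def IsMinSep {V : Type*} (G : SimpleGraph V) (x : V) (Y : Set V) (S : Finset V) : Prop :=
  IsSep G x Y S ∧ ∀ S' : Finset V, IsSep G x Y S' → S.card ≤ S'.card

/-- `S` is the minimum `xY`-separator closest to `x`. -/
def IsClosestMinSep {V : Type*} (G : SimpleGraph V) (x : V) (Y : Set V) (S : Finset V) : Prop :=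
  IsMinSep G x Y S ∧
    ∀ S' : Finset V, IsMinSep G x Y S' → reachSet G x S ⊆ reachSet G x S'

theorem branching_increases_maxflow {V : Type*} [Fintype V] [DecidableEq V]
    (G : SimpleGraph V) (x : V) (Y : Finset V) (hxY : x ∉ Y)
    (W : Finset V) (hW : IsClosestMinSep G x ↑Y W)
    (t : V) (ht : t ∈ reachSet G x W) :
    ∀ S : Finset V, IsSep G x (↑(insert t Y)) S → W.card < S.card := by
  intro S hS
  have hSY : IsSep G x ↑Y S := ⟨hS.1, fun y hy => hS.2 y (by simp [hy])⟩
  have h1 : W.card ≤ S.card := hW.1.2 S hSY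
  rcases lt_or_eq_of_le h1 with h | h
  · exact h
  · exfalso
    have hmin : IsMinSep G x ↑Y S := ⟨hSY, fun S' hS' => h ▸ hW.1.2 S' hS'⟩
    exact hS.2 t (by simp) (hW.2 S hmin ht)
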